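/- Let q ≥ 2 be an even integer, let ℓ ≥ 2, set n = 2ℓ+1, and write n = q·m₀ + s₀ with m₀, s₀ integers, 0 ≤ s₀ ≤ q−1; set K = m₀²(q−s₀) + (m₀+1)²·s₀. Then the number of long roots α of Δ(B_ℓ) with q dividing ht(α), plus the number of short roots β of Δ(B_ℓ) with q/2 dividing ht(β), equals (K − 2m₀ − 1)/2 − ℓ + m₀ if m₀ is even, and equals (K − 2m₀ − 1)/2 − ℓ + m₀ + 1 if m₀ is odd. -/

import Mathlib

noncomputable section

/-- `stdVec ℓ i` is the `i`-th standard basis vector `e_i` of `ℚ^ℓ`. -/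
def stdVec (ℓ : ℕ) (i : Fin ℓ) : Fin ℓ → ℚ := Pi.single i 1

/-- The simple roots of the root system of type `Bₗ`:
`αᵢ = eᵢ − eᵢ₊₁` for `1 ≤ i ≤ ℓ−1` and `α_ℓ = e_ℓ`. -/
def simpleB (ℓ : ℕ) (i : Fin ℓ) : Fin ℓ → ℚ :=
  if h : (i : ℕ) + 1 < ℓ then stdVec ℓ i - stdVec ℓ ⟨(i : ℕ) + 1, h⟩ else stdVec ℓ i

/-- The long roots of `Δ(Bₗ)`: `{±eᵢ ± eⱼ : i < j}`. -/
def longRootsB (ℓ : ℕ) : Set (Fin ℓ → ℚ) :=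
  {v | ∃ i j : Fin ℓ, i < j ∧ (v = stdVec ℓ i + stdVec ℓ j ∨ v = stdVec ℓ i - stdVec ℓ j ∨
        v = -stdVec ℓ i + stdVec ℓ j ∨ v = -stdVec ℓ i - stdVec ℓ j)}

/-- The short roots of `Δ(Bₗ)`: `{±eᵢ}`. -/
def shortRootsB (ℓ : ℕ) : Set (Fin ℓ → ℚ) :=
  {v | ∃ i : Fin ℓ, v = stdVec ℓ i ∨ v = -stdVec ℓ i}

/-! ### Auxiliary arithmetic lemmas -/

lemma count_dvd (d : ℤ) (hd : 0 < d) (a b y : ℤ) :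
    ((Finset.Ioc a b).filter (fun x => d ∣ x + y)).card = ((b+y)/d - (a+y)/d).toNat := by
  have himg : ((Finset.Ioc a b).filter (fun x => d ∣ x + y))
      = (Finset.Ioc ((a+y)/d) ((b+y)/d)).image (fun k => d*k - y) := by
    ext x
    simp only [Finset.mem_filter, Finset.mem_Ioc, Finset.mem_image]
    constructor
    · rintro ⟨⟨hax, hxb⟩, k, hk⟩
      refine ⟨k, ⟨?_, ?_⟩, by omega⟩
      · rw [Int.ediv_lt_iff_lt_mul hd]; nlinarith [hk]
      · rw [Int.le_ediv_iff_mul_le hd]; nlinarith [hk]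
    · rintro ⟨k, ⟨hk1, hk2⟩, rfl⟩
      rw [Int.ediv_lt_iff_lt_mul hd] at hk1
      rw [Int.le_ediv_iff_mul_le hd] at hk2
      exact ⟨⟨by nlinarith, by nlinarith⟩, k, by ring⟩
  have hinj : Function.Injective (fun k : ℤ => d*k - y) := by
    intro k k' h
    simp only at h
    have h2 : d*k = d*k' := by omega
    exact mul_left_cancel₀ hd.ne' h2
  rw [himg, Finset.card_image_of_injective _ hinj, Int.card_Ioc]

lemma ediv_eq_of (h a k r : ℤ) (ha : a = k * h + r) (h0 : 0 ≤ r) (h1 : r < h) : a / h = k := by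
  subst ha
  have hh : h ≠ 0 := by omega
  rw [add_comm, Int.add_mul_ediv_right _ _ hh, Int.ediv_eq_zero_of_lt h0 h1, zero_add]

lemma ediv_sub_ediv_ind (Q s t : ℤ) (h0 : 0 ≤ s) (h1 : s < Q) :
    t / Q - (t - s) / Q = if t % Q < s then 1 else 0 := by
  have hQ : 0 < Q := by omega
  have hd := Int.mul_ediv_add_emod t Q
  set k := t / Q with hk
  set r := t % Q with hr
  have hr0 : 0 ≤ r := Int.emod_nonneg t (by omega)
  have hr1 : r < Q := Int.emod_lt_of_pos t hQ
  have hts : t - s = (r - s) + k * Q := by rw [← hd]; ring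
  rw [hts, Int.add_mul_ediv_right _ _ (by omega : Q ≠ 0)]
  by_cases hc : r < s
  · rw [if_pos hc]
    have : r - s + Q ≥ 0 := by omega
    have hdiv : (r - s) / Q = -1 := by
      have h2 : ((r - s + Q) + (-1) * Q) / Q = (r-s+Q)/Q + (-1) :=
        Int.add_mul_ediv_right _ _ (by omega : Q ≠ 0)
      have h3 : (r - s + Q) / Q = 0 := Int.ediv_eq_zero_of_lt (by omega) (by omega)
      have h4 : (r - s + Q) + (-1) * Q = r - s := by ring
      rw [h4, h3] at h2
      omega
    omega
  · rw [if_neg hc]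
    have hdiv : (r - s) / Q = 0 := Int.ediv_eq_zero_of_lt (by omega) (by omega)
    omega

lemma count_emod_lt (Q s m N : ℤ) (hQ : 0 < Q) (hs0 : 0 ≤ s) (hs1 : s < Q) (hm : 0 ≤ m)
    (hN : N = Q * m + s) :
    (((Finset.Ioc (-1 : ℤ) (N - 1)).filter (fun t => t % Q < s)).card : ℤ) = s * (m + 1) := by
  have himg : (Finset.Ioc (-1 : ℤ) (N - 1)).filter (fun t => t % Q < s)
      = ((Finset.Ioc (-1:ℤ) m) ×ˢ (Finset.Ioc (-1:ℤ) (s-1))).image (fun p => Q * p.1 + p.2) := by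
    ext t
    simp only [Finset.mem_filter, Finset.mem_Ioc, Finset.mem_image, Finset.mem_product]
    constructor
    · rintro ⟨⟨ht0, htN⟩, hmod⟩
      refine ⟨(t / Q, t % Q), ⟨⟨?_, ?_⟩, ?_, ?_⟩, Int.mul_ediv_add_emod t Q⟩
      · have := Int.ediv_nonneg (by omega : (0:ℤ) ≤ t) hQ.le; omega
      · by_contra hc
        push_neg at hc
        have h1 : Q * (m + 1) ≤ Q * (t / Q) := by
          apply mul_le_mul_of_nonneg_left (by omega) hQ.le
        have h2 : Q * (m+1) = Q * m + Q := by ring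
        have h3 := Int.mul_ediv_add_emod t Q
        have h4 := Int.emod_nonneg t (by omega : Q ≠ 0)
        omega
      · exact Int.emod_nonneg t (by omega)
      · omega
    · rintro ⟨⟨k, r⟩, ⟨⟨hk0, hkm⟩, hr0, hr1⟩, rfl⟩
      dsimp only
      have hmod : (Q * k + r) % Q = r := by
        have h1 : Q * k + r = r + k * Q := by ring
        rw [h1, Int.add_mul_emod_self_right, Int.emod_eq_of_lt (by omega) (by omega)]
      have hQk0 : 0 ≤ Q * k := mul_nonneg hQ.le (by omega)
      have hQkm : Q * k ≤ Q * m := mul_le_mul_of_nonneg_left (by omega) hQ.le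
      exact ⟨⟨by omega, by omega⟩, by omega⟩
  have hinj : Set.InjOn (fun p : ℤ × ℤ => Q * p.1 + p.2)
      (((Finset.Ioc (-1:ℤ) m) ×ˢ (Finset.Ioc (-1:ℤ) (s-1)) : Finset (ℤ × ℤ)) : Set (ℤ × ℤ)) := by
    rintro ⟨k, r⟩ hkr ⟨k', r'⟩ hkr' heq
    simp only [Finset.coe_product, Set.mem_prod, Finset.mem_coe, Finset.mem_Ioc] at hkr hkr'
    simp only at heq
    have hdvd : Q ∣ r' - r := ⟨k - k', by linarith [heq]⟩
    have hrr : r' - r = 0 := Int.eq_zero_of_abs_lt_dvd hdvd (by rw [abs_lt]; omega)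
    have hkk : Q * k = Q * k' := by omega
    have hk : k = k' := mul_left_cancel₀ (by omega : Q ≠ 0) hkk
    have hr : r = r' := by omega
    simp [hk, hr]
  rw [himg, Finset.card_image_of_injOn hinj, Finset.card_product]
  rw [Int.card_Ioc, Int.card_Ioc]
  push_cast
  rw [Int.toNat_of_nonneg (by omega), Int.toNat_of_nonneg (by omega)]
  ring

/-! ### Geometric auxiliary definitions and lemmas -/

def sgnq (u : ℤ) : ℚ := if 0 < u then 1 else -1

def idxB (ℓ : ℕ) (hl : 0 < ℓ) (u : ℤ) : Fin ℓ := ⟨ℓ - max 1 u.natAbs, by omega⟩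

def phiS (ℓ : ℕ) (hl : 0 < ℓ) (u : ℤ) : Fin ℓ → ℚ := sgnq u • stdVec ℓ (idxB ℓ hl u)

def phiL (ℓ : ℕ) (hl : 0 < ℓ) (p : ℤ × ℤ) : Fin ℓ → ℚ := phiS ℓ hl p.1 + phiS ℓ hl p.2

lemma sgnq_ne_zero (u : ℤ) : sgnq u ≠ 0 := by unfold sgnq; split <;> norm_num

lemma sgnq_eq_iff (u u' : ℤ) (h : sgnq u = sgnq u') : (0 < u ↔ 0 < u') := by
  unfold sgnq at h
  split_ifs at h with h1 h2 h2 <;>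
    first | (exact iff_of_true h1 h2) | (exact iff_of_false h1 h2) | norm_num at h

lemma phiS_apply (ℓ : ℕ) (hl : 0 < ℓ) (u : ℤ) (t : Fin ℓ) :
    phiS ℓ hl u t = if t = idxB ℓ hl u then sgnq u else 0 := by
  simp [phiS, stdVec, Pi.single_apply, mul_ite]

lemma idxB_val (ℓ : ℕ) (hl : 0 < ℓ) (u : ℤ) (h1 : 1 ≤ u.natAbs) :
    ((idxB ℓ hl u : Fin ℓ) : ℕ) = ℓ - u.natAbs := by simp [idxB]; omega

lemma phiS_pos (ℓ : ℕ) (hl : 0 < ℓ) (i : Fin ℓ) : phiS ℓ hl ((ℓ : ℤ) - (i : ℕ)) = stdVec ℓ i := by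
  have hi := i.2
  have h1 : (0:ℤ) < (ℓ : ℤ) - (i : ℕ) := by omega
  have h2 : idxB ℓ hl ((ℓ : ℤ) - (i : ℕ)) = i := by
    apply Fin.ext; simp [idxB]; omega
  rw [phiS, h2, sgnq, if_pos h1, one_smul]

lemma phiS_neg (ℓ : ℕ) (hl : 0 < ℓ) (i : Fin ℓ) :
    phiS ℓ hl (-((ℓ : ℤ) - (i : ℕ))) = -stdVec ℓ i := by
  have hi := i.2
  have h1 : ¬ (0:ℤ) < -((ℓ : ℤ) - (i : ℕ)) := by omega
  have h2 : idxB ℓ hl (-((ℓ : ℤ) - (i : ℕ))) = i := by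
    apply Fin.ext; simp [idxB]; omega
  rw [phiS, h2, sgnq, if_neg h1, neg_one_smul]

lemma phiS_form (ℓ : ℕ) (hl : 0 < ℓ) (u : ℤ) :
    phiS ℓ hl u = stdVec ℓ (idxB ℓ hl u) ∨ phiS ℓ hl u = -stdVec ℓ (idxB ℓ hl u) := by
  rw [phiS, sgnq]
  split_ifs
  · left; rw [one_smul]
  · right; rw [neg_one_smul]

lemma ht_std (ℓ : ℕ) (ht : (Fin ℓ → ℚ) →ₗ[ℚ] ℚ) (hht : ∀ i, ht (simpleB ℓ i) = 1) :
    ∀ (k : ℕ) (i : Fin ℓ), (i:ℕ) + k + 1 = ℓ → ht (stdVec ℓ i) = k + 1 := by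
  intro k
  induction k with
  | zero =>
    intro i hi
    have hn : ¬((i:ℕ) + 1 < ℓ) := by omega
    have h := hht i
    rw [simpleB, dif_neg hn] at h
    rw [h]; norm_num
  | succ k IH =>
    intro i hi
    have h1 : (i:ℕ) + 1 < ℓ := by omega
    have h := hht i
    rw [simpleB, dif_pos h1, map_sub] at h
    have h2 := IH ⟨(i:ℕ)+1, h1⟩ (by simp; omega)
    push_cast at h2 ⊢
    linarith

lemma ht_std' (ℓ : ℕ) (ht : (Fin ℓ → ℚ) →ₗ[ℚ] ℚ) (hht : ∀ i, ht (simpleB ℓ i) = 1)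
    (i : Fin ℓ) : ht (stdVec ℓ i) = (ℓ : ℚ) - (i : ℕ) := by
  have hi := i.2
  have h := ht_std ℓ ht hht (ℓ - (i:ℕ) - 1) i (by omega)
  rw [h]
  have h3 : ((ℓ - (i:ℕ) - 1 : ℕ) : ℚ) = (ℓ:ℚ) - (i:ℕ) - 1 := by
    have h4 : (ℓ - (i:ℕ) - 1 : ℕ) + ((i:ℕ) + 1) = ℓ := by omega
    have h5 := congrArg (fun n : ℕ => (n : ℚ)) h4
    push_cast at h5
    linarith
  rw [h3]; ring

lemma sgnq_mul_natAbs (u : ℤ) : sgnq u * (u.natAbs : ℚ) = (u : ℚ) := by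
  have h4 : ((u.natAbs : ℕ) : ℚ) = |(u : ℚ)| := by rw [Nat.cast_natAbs]; push_cast; ring
  by_cases h : 0 < u
  · rw [sgnq, if_pos h, one_mul, h4, abs_of_pos (by exact_mod_cast h)]
  · rw [sgnq, if_neg h, h4, abs_of_nonpos (by exact_mod_cast (by omega : u ≤ 0))]
    ring

lemma ht_phiS (ℓ : ℕ) (hl : 0 < ℓ) (ht : (Fin ℓ → ℚ) →ₗ[ℚ] ℚ)
    (hht : ∀ i, ht (simpleB ℓ i) = 1) (u : ℤ) (h1 : 1 ≤ u.natAbs) (h2 : u.natAbs ≤ ℓ) :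
    ht (phiS ℓ hl u) = (u : ℚ) := by
  rw [phiS, map_smul, ht_std' ℓ ht hht, smul_eq_mul, idxB_val ℓ hl u h1,
    Nat.cast_sub h2]
  have h3 : (ℓ:ℚ) - ((ℓ:ℚ) - (u.natAbs : ℚ)) = (u.natAbs : ℚ) := by ring
  rw [h3, sgnq_mul_natAbs]

lemma phiS_inj (ℓ : ℕ) (hl : 0 < ℓ) (u u' : ℤ) (h1 : 1 ≤ u.natAbs) (h2 : u.natAbs ≤ ℓ)
    (h1' : 1 ≤ u'.natAbs) (h2' : u'.natAbs ≤ ℓ) (h : phiS ℓ hl u = phiS ℓ hl u') : u = u' := by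
  have e := congrFun h (idxB ℓ hl u')
  rw [phiS_apply, phiS_apply, if_pos rfl] at e
  have hii : idxB ℓ hl u' = idxB ℓ hl u := by
    by_contra hh; rw [if_neg hh] at e; exact sgnq_ne_zero u' e.symm
  rw [if_pos hii] at e
  have hv := congrArg Fin.val hii
  rw [idxB_val ℓ hl u h1, idxB_val ℓ hl u' h1'] at hv
  have hiff := sgnq_eq_iff u u' e
  omega

lemma phiL_inj (ℓ : ℕ) (hl : 0 < ℓ) (u v u' v' : ℤ)
    (hv : 1 ≤ v.natAbs) (huv : v.natAbs < u.natAbs) (hu : u.natAbs ≤ ℓ)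
    (hv' : 1 ≤ v'.natAbs) (huv' : v'.natAbs < u'.natAbs) (hu' : u'.natAbs ≤ ℓ)
    (h : phiL ℓ hl (u, v) = phiL ℓ hl (u', v')) : u = u' ∧ v = v' := by
  have key : ∀ t : Fin ℓ,
      (if t = idxB ℓ hl u then sgnq u else 0) + (if t = idxB ℓ hl v then sgnq v else 0) =
      (if t = idxB ℓ hl u' then sgnq u' else 0) + (if t = idxB ℓ hl v' then sgnq v' else 0) := by
    intro t
    have e := congrFun h t
    simpa [phiL, Pi.add_apply, phiS_apply] using e
  have hiu := idxB_val ℓ hl u (by omega)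
  have hiv := idxB_val ℓ hl v (by omega)
  have hiu' := idxB_val ℓ hl u' (by omega)
  have hiv' := idxB_val ℓ hl v' (by omega)
  have hne : idxB ℓ hl u ≠ idxB ℓ hl v := by
    intro hh; have := congrArg Fin.val hh; omega
  have hne' : idxB ℓ hl u' ≠ idxB ℓ hl v' := by
    intro hh; have := congrArg Fin.val hh; omega
  have hii : idxB ℓ hl u' = idxB ℓ hl u := by
    by_contra hne2
    have e1 := key (idxB ℓ hl u')
    rw [if_pos rfl, if_neg hne', add_zero, if_neg hne2] at e1
    rw [zero_add] at e1
    have hij' : idxB ℓ hl u' = idxB ℓ hl v := by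
      by_contra hh; rw [if_neg hh] at e1; exact sgnq_ne_zero u' e1.symm
    have e2 := key (idxB ℓ hl u)
    rw [if_pos rfl, if_neg hne, add_zero, if_neg (fun hh => hne2 hh.symm), zero_add] at e2
    have hij : idxB ℓ hl u = idxB ℓ hl v' := by
      by_contra hh; rw [if_neg hh] at e2; exact sgnq_ne_zero u e2
    have c1 := congrArg Fin.val hij'
    have c2 := congrArg Fin.val hij
    omega
  have hjj : idxB ℓ hl v' = idxB ℓ hl v := by
    have e3 := key (idxB ℓ hl v')
    rw [if_neg (fun hh => hne' (hii.trans hh.symm)),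
      if_neg (fun hh : idxB ℓ hl v' = idxB ℓ hl u' => hne' hh.symm), if_pos rfl,
      zero_add, zero_add] at e3
    by_contra hh
    rw [if_neg hh] at e3
    exact sgnq_ne_zero v' e3.symm
  have e4 := key (idxB ℓ hl u)
  rw [if_pos rfl, if_neg hne, add_zero, if_pos hii.symm,
    if_neg (fun hh => hne (hh.trans hjj)), add_zero] at e4
  have e5 := key (idxB ℓ hl v)
  rw [if_neg (fun hh : idxB ℓ hl v = idxB ℓ hl u => hne hh.symm), if_pos rfl, zero_add,
    if_neg (fun hh => hne (hh.trans hii).symm), if_pos hjj.symm, zero_add] at e5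
  have c1 := congrArg Fin.val hii
  have c2 := congrArg Fin.val hjj
  have hiffu := sgnq_eq_iff u u' e4
  have hiffv := sgnq_eq_iff v v' e5
  constructor <;> omega
/-- Let `q ≥ 2` be an even integer, let `ℓ ≥ 2`, set `n = 2ℓ+1`, and write
`n = q·m₀ + s₀` with `m₀, s₀` integers, `0 ≤ s₀ ≤ q−1`; set `K = m₀²(q−s₀) + (m₀+1)²·s₀`.
Then the number of long roots `α` of `Δ(Bₗ)` with `q` dividing `ht(α)`, plus the number of
short roots `β` of `Δ(Bₗ)` with `q/2` dividing `ht(β)`, equals `(K − 2m₀ − 1)/2 − ℓ + m₀` if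
`m₀` is even, and `(K − 2m₀ − 1)/2 − ℓ + m₀ + 1` if `m₀` is odd.  The height is computed
against any linear functional taking the value `1` on each simple root of `Bₗ`. -/
theorem statement19 (q ℓ : ℕ) (hq : 2 ≤ q) (hqe : Even q) (hℓ : 2 ≤ ℓ)
    (m₀ s₀ K : ℤ)
    (hdecomp : (2 * ℓ + 1 : ℤ) = (q : ℤ) * m₀ + s₀) (hs0 : 0 ≤ s₀) (hs1 : s₀ ≤ (q : ℤ) - 1)
    (hK : K = m₀ ^ 2 * ((q : ℤ) - s₀) + (m₀ + 1) ^ 2 * s₀)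
    (ht : (Fin ℓ → ℚ) →ₗ[ℚ] ℚ) (hht : ∀ i : Fin ℓ, ht (simpleB ℓ i) = 1) :
    (({α | α ∈ longRootsB ℓ ∧ ∃ k : ℤ, ht α = (q : ℚ) * k}.ncard : ℚ) +
      ({β | β ∈ shortRootsB ℓ ∧ ∃ k : ℤ, ht β = ((q / 2 : ℕ) : ℚ) * k}.ncard : ℚ)) =
      ((K : ℚ) - 2 * (m₀ : ℚ) - 1) / 2 - (ℓ : ℚ) +
        (if Even m₀ then (m₀ : ℚ) else (m₀ : ℚ) + 1) := by
  classical
  have hl : 0 < ℓ := by omega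
  have hl2 : (2:ℤ) ≤ (ℓ:ℤ) := by exact_mod_cast hℓ
  obtain ⟨c, hc⟩ := hqe
  set H : ℕ := q / 2 with hHdef
  have hqH : q = 2 * H := by omega
  have hHq : (q : ℤ) = 2 * (H : ℤ) := by exact_mod_cast hqH
  have hH1 : 1 ≤ H := by omega
  have hH0 : (0:ℤ) < (H:ℤ) := by exact_mod_cast (by omega : 0 < H)
  have hq0 : (0:ℤ) < (q:ℤ) := by exact_mod_cast (by omega : 0 < q)
  have hm0 : 0 ≤ m₀ := by
    by_contra hcon
    push_neg at hcon
    have h1 : (q:ℤ) * m₀ ≤ (q:ℤ) * (-1) := mul_le_mul_of_nonneg_left (by omega) hq0.le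
    have h2 : (q:ℤ) * (-1) = -(q:ℤ) := by ring
    omega
  have hqm : (q:ℤ) * m₀ = 2*((H:ℤ)*m₀) := by rw [hHq]; ring
  obtain ⟨r, hr0, hr1, hlr⟩ : ∃ r : ℤ, 0 ≤ r ∧ r < (H:ℤ) ∧ (ℓ:ℤ) = (H:ℤ) * m₀ + r := by
    refine ⟨(ℓ:ℤ) - (H:ℤ)*m₀, by omega, by omega, by ring⟩
  obtain ⟨a, hab⟩ : ∃ a : ℤ, m₀ = 2*a + m₀ % 2 := ⟨m₀/2, by omega⟩
  have ha0 : 0 ≤ a := by omega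
  have hb01 : m₀ % 2 = 0 ∨ m₀ % 2 = 1 := by omega
  have hHb0 : 0 ≤ (H:ℤ) * (m₀ % 2) ∧ (H:ℤ) * (m₀ % 2) ≤ (H:ℤ) := by
    rcases hb01 with hb | hb <;> rw [hb] <;> constructor <;> simp <;> omega
  -- ediv facts
  have hd1 : (ℓ:ℤ) / (H:ℤ) = m₀ := ediv_eq_of _ _ _ r (by rw [hlr]; ring) hr0 hr1
  have hd2 : (-(ℓ:ℤ) - 1) / (H:ℤ) = -m₀ - 1 :=
    ediv_eq_of _ _ _ ((H:ℤ) - r - 1) (by linear_combination -hlr) (by omega) (by omega)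
  have hd3 : (ℓ:ℤ) / (q:ℤ) = a :=
    ediv_eq_of _ _ _ ((H:ℤ)*(m₀ % 2) + r) (by linear_combination hlr + (H:ℤ)*hab - a*hHq)
      (by omega) (by omega)
  have hd4 : (-(ℓ:ℤ) - 1) / (q:ℤ) = -a - 1 :=
    ediv_eq_of _ _ _ (2*(H:ℤ) - (H:ℤ)*(m₀ % 2) - r - 1)
      (by linear_combination -hlr - (H:ℤ)*hab + (a+1)*hHq) (by omega) (by omega)
  -- finsets
  set S : Finset ℤ := Finset.Ioc (-(ℓ:ℤ) - 1) (ℓ:ℤ) with hSdef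
  set Sf : Finset ℤ := S.filter (fun u => u ≠ 0 ∧ (H:ℤ) ∣ u) with hSfdef
  set Qf : Finset ℤ := S.filter (fun u => u ≠ 0 ∧ (q:ℤ) ∣ u) with hQfdef
  set Lf : Finset (ℤ×ℤ) := (S ×ˢ S).filter
    (fun p => 1 ≤ p.2.natAbs ∧ p.2.natAbs < p.1.natAbs ∧ (q:ℤ) ∣ p.1 + p.2) with hLfdef
  set Rf : Finset (ℤ×ℤ) := (S ×ˢ S).filter
    (fun p => p.1 ≠ p.2 ∧ p.1 ≠ -p.2 ∧ (q:ℤ) ∣ p.1 + p.2) with hRfdef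
  set Pall : Finset (ℤ×ℤ) := (S ×ˢ S).filter (fun p => (q:ℤ) ∣ p.1 + p.2) with hPdef
  have hScard : S.card = 2*ℓ+1 := by
    rw [hSdef, Int.card_Ioc]; omega
  -- card computations
  have hSfcard : (Sf.card : ℤ) = 2*m₀ := by
    have hcd := count_dvd (H:ℤ) hH0 (-(ℓ:ℤ)-1) (ℓ:ℤ) 0
    simp only [add_zero] at hcd
    rw [hd1, hd2] at hcd
    have hfe : Sf = ((Finset.Ioc (-(ℓ:ℤ)-1) (ℓ:ℤ)).filter (fun u => (H:ℤ) ∣ u)).erase 0 := by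
      rw [hSfdef, hSdef]
      ext x
      simp only [Finset.mem_erase, Finset.mem_filter]
      tauto
    have h0mem : (0:ℤ) ∈ (Finset.Ioc (-(ℓ:ℤ)-1) (ℓ:ℤ)).filter (fun u => (H:ℤ) ∣ u) := by
      simp only [Finset.mem_filter, Finset.mem_Ioc]
      exact ⟨⟨by omega, by omega⟩, dvd_zero _⟩
    rw [hfe, Finset.card_erase_of_mem h0mem, hcd]
    omega
  have hQfcard : (Qf.card : ℤ) = 2*a := by
    have hcd := count_dvd (q:ℤ) hq0 (-(ℓ:ℤ)-1) (ℓ:ℤ) 0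
    simp only [add_zero] at hcd
    rw [hd3, hd4] at hcd
    have hfe : Qf = ((Finset.Ioc (-(ℓ:ℤ)-1) (ℓ:ℤ)).filter (fun u => (q:ℤ) ∣ u)).erase 0 := by
      rw [hQfdef, hSdef]
      ext x
      simp only [Finset.mem_erase, Finset.mem_filter]
      tauto
    have h0mem : (0:ℤ) ∈ (Finset.Ioc (-(ℓ:ℤ)-1) (ℓ:ℤ)).filter (fun u => (q:ℤ) ∣ u) := by
      simp only [Finset.mem_filter, Finset.mem_Ioc]
      exact ⟨⟨by omega, by omega⟩, dvd_zero _⟩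
    rw [hfe, Finset.card_erase_of_mem h0mem, hcd]
    omega
  have hPallcard : (Pall.card : ℤ) = K := by
    have hP1 : Pall.card = ∑ x ∈ S, ((S.filter (fun y => (q:ℤ) ∣ x + y)).card) := by
      rw [hPdef, Finset.card_filter, Finset.sum_product]
      exact Finset.sum_congr rfl (fun x _ => (Finset.card_filter _ _).symm)
    have hP2 : ∀ x : ℤ, ((S.filter (fun y => (q:ℤ) ∣ x + y)).card)
        = (((ℓ:ℤ) + x)/(q:ℤ) - ((-(ℓ:ℤ)-1) + x)/(q:ℤ)).toNat := by
      intro x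
      have hfeq : S.filter (fun y : ℤ => (q:ℤ) ∣ x + y) = S.filter (fun y : ℤ => (q:ℤ) ∣ y + x) :=
        Finset.filter_congr (fun y _ => by rw [Int.add_comm x y])
      rw [hfeq, hSdef, count_dvd (q:ℤ) hq0 (-(ℓ:ℤ)-1) (ℓ:ℤ) x]
    have hP3 : ((Pall.card : ℕ) : ℤ) = ∑ x ∈ S, (((ℓ:ℤ) + x)/(q:ℤ) - ((-(ℓ:ℤ)-1) + x)/(q:ℤ)) := by
      rw [hP1]
      push_cast
      refine Finset.sum_congr rfl fun x _ => ?_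
      rw [hP2 x]
      exact Int.toNat_of_nonneg
        (by have := Int.ediv_le_ediv hq0 (show (-(ℓ:ℤ)-1)+x ≤ (ℓ:ℤ)+x by omega); omega)
    have hmap : (Finset.Ioc (-1:ℤ) (2*(ℓ:ℤ))).map (addRightEmbedding (-(ℓ:ℤ))) = S := by
      rw [hSdef, Finset.map_add_right_Ioc]
      congr 1 <;> ring
    have hP4 : ∑ x ∈ S, (((ℓ:ℤ) + x)/(q:ℤ) - ((-(ℓ:ℤ)-1) + x)/(q:ℤ))
        = ∑ t ∈ Finset.Ioc (-1:ℤ) (2*(ℓ:ℤ)), ((m₀:ℤ) + if t % (q:ℤ) < s₀ then 1 else 0) := by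
      rw [← hmap, Finset.sum_map]
      refine Finset.sum_congr rfl fun t _ => ?_
      simp only [addRightEmbedding_apply]
      have e1 : (ℓ:ℤ) + (t + -(ℓ:ℤ)) = t := by ring
      have e2 : (-(ℓ:ℤ)-1) + (t + -(ℓ:ℤ)) = (t - s₀) + (-m₀)*(q:ℤ) := by
        linear_combination -hdecomp
      rw [e1, e2, Int.add_mul_ediv_right _ _ (by omega : (q:ℤ) ≠ 0)]
      have hind := ediv_sub_ediv_ind (q:ℤ) s₀ t hs0 (by omega)
      omega
    have hcnt := count_emod_lt (q:ℤ) s₀ m₀ (2*(ℓ:ℤ)+1) hq0 hs0 (by omega) hm0 hdecomp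
    have h2l : (2*(ℓ:ℤ)+1) - 1 = 2*(ℓ:ℤ) := by ring
    rw [h2l] at hcnt
    have hP5 : ∑ t ∈ Finset.Ioc (-1:ℤ) (2*(ℓ:ℤ)), ((m₀:ℤ) + if t % (q:ℤ) < s₀ then 1 else 0)
        = (2*(ℓ:ℤ)+1)*m₀ + s₀*(m₀+1) := by
      rw [Finset.sum_add_distrib, Finset.sum_const, Finset.sum_boole, hcnt, nsmul_eq_mul,
        Int.card_Ioc]
      have htn : (((2*(ℓ:ℤ) - (-1)).toNat : ℕ) : ℤ) = 2*(ℓ:ℤ)+1 := by omega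
      rw [htn]
    rw [hP3, hP4, hP5]
    linear_combination m₀ * hdecomp - hK
  have hpart1 : Pall.card = S.card + Sf.card + Rf.card := by
    have hsp1 := Finset.card_filter_add_card_filter_not
      (s := Pall) (p := fun p : ℤ×ℤ => p.1 = -p.2)
    have hsp2 := Finset.card_filter_add_card_filter_not
      (s := Pall.filter (fun p : ℤ×ℤ => ¬ p.1 = -p.2)) (p := fun p : ℤ×ℤ => p.1 = p.2)
    have hA : Pall.filter (fun p : ℤ×ℤ => p.1 = -p.2) = S.image (fun x => (-x, x)) := by
      rw [hPdef]
      ext p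
      simp only [Finset.mem_filter, Finset.mem_product, Finset.mem_image]
      constructor
      · rintro ⟨⟨⟨h1, h2⟩, hdvd⟩, heq⟩
        refine ⟨p.2, h2, ?_⟩
        rw [← heq]
      · rintro ⟨x, hx, rfl⟩
        have hx' : -(ℓ:ℤ) - 1 < x ∧ x ≤ (ℓ:ℤ) := by rw [hSdef] at hx; exact Finset.mem_Ioc.mp hx
        have hmx : -x ∈ S := by rw [hSdef]; exact Finset.mem_Ioc.mpr ⟨by omega, by omega⟩
        exact ⟨⟨⟨hmx, hx⟩, by simp⟩, rfl⟩
    have hAcard : (Pall.filter (fun p : ℤ×ℤ => p.1 = -p.2)).card = S.card := by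
      rw [hA]
      exact Finset.card_image_of_injective _ (fun x y hxy => by
        have := congrArg Prod.snd hxy; simpa using this)
    have hB : (Pall.filter (fun p : ℤ×ℤ => ¬ p.1 = -p.2)).filter (fun p : ℤ×ℤ => p.1 = p.2)
        = Sf.image (fun x => (x, x)) := by
      rw [hPdef, hSfdef]
      ext p
      simp only [Finset.mem_filter, Finset.mem_product, Finset.mem_image]
      constructor
      · rintro ⟨⟨⟨⟨h1, h2⟩, hdvd⟩, hne⟩, heq⟩
        refine ⟨p.1, ⟨h1, fun h0 => hne (by omega), ?_⟩, ?_⟩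
        · obtain ⟨cc, hcc⟩ := hdvd
          refine ⟨cc, ?_⟩
          have hqc : (q:ℤ)*cc = 2*((H:ℤ)*cc) := by rw [hHq]; ring
          omega
        · exact Prod.ext_iff.mpr ⟨rfl, heq⟩
      · rintro ⟨x, ⟨hxS, hx0, cc, hcc⟩, rfl⟩
        refine ⟨⟨⟨⟨hxS, hxS⟩, ⟨cc, ?_⟩⟩, fun h => hx0 (by omega)⟩, rfl⟩
        rw [hcc, hHq]; ring
    have hBcard : ((Pall.filter (fun p : ℤ×ℤ => ¬ p.1 = -p.2)).filter
        (fun p : ℤ×ℤ => p.1 = p.2)).card = Sf.card := by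
      rw [hB]
      exact Finset.card_image_of_injective _ (fun x y hxy => by
        have := congrArg Prod.fst hxy; simpa using this)
    have hC : (Pall.filter (fun p : ℤ×ℤ => ¬ p.1 = -p.2)).filter (fun p : ℤ×ℤ => ¬ p.1 = p.2)
        = Rf := by
      rw [hPdef, hRfdef]
      ext p
      simp only [Finset.mem_filter, Finset.mem_product]
      tauto
    rw [hC] at hsp2
    omega
  have hpart2 : Rf.card = 2*Lf.card + 2*Qf.card := by
    have hsp3 := Finset.card_filter_add_card_filter_not
      (s := Rf) (p := fun p : ℤ×ℤ => p.2 = 0)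
    have hsp4 := Finset.card_filter_add_card_filter_not
      (s := Rf.filter (fun p : ℤ×ℤ => ¬ p.2 = 0)) (p := fun p : ℤ×ℤ => p.1 = 0)
    have hsp5 := Finset.card_filter_add_card_filter_not
      (s := (Rf.filter (fun p : ℤ×ℤ => ¬ p.2 = 0)).filter (fun p : ℤ×ℤ => ¬ p.1 = 0))
      (p := fun p : ℤ×ℤ => p.2.natAbs < p.1.natAbs)
    have h0S : (0:ℤ) ∈ S := by rw [hSdef]; exact Finset.mem_Ioc.mpr ⟨by omega, by omega⟩
    have hD : Rf.filter (fun p : ℤ×ℤ => p.2 = 0) = Qf.image (fun x => (x, (0:ℤ))) := by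
      rw [hRfdef, hQfdef]
      ext p
      simp only [Finset.mem_filter, Finset.mem_product, Finset.mem_image]
      constructor
      · rintro ⟨⟨⟨h1, h2⟩, hne1, hne2, hdvd⟩, h20⟩
        refine ⟨p.1, ⟨h1, by omega, by rwa [h20, add_zero] at hdvd⟩, ?_⟩
        exact Prod.ext_iff.mpr ⟨rfl, h20.symm⟩
      · rintro ⟨x, ⟨hxS, hx0, hdvd⟩, rfl⟩
        exact ⟨⟨⟨hxS, h0S⟩, hx0, by simpa using hx0, by rwa [add_zero]⟩, rfl⟩
    have hDcard : (Rf.filter (fun p : ℤ×ℤ => p.2 = 0)).card = Qf.card := by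
      rw [hD]
      exact Finset.card_image_of_injective _ (fun x y hxy => by
        have := congrArg Prod.fst hxy; simpa using this)
    have hE : (Rf.filter (fun p : ℤ×ℤ => ¬ p.2 = 0)).filter (fun p : ℤ×ℤ => p.1 = 0)
        = Qf.image (fun y => ((0:ℤ), y)) := by
      rw [hRfdef, hQfdef]
      ext p
      simp only [Finset.mem_filter, Finset.mem_product, Finset.mem_image]
      constructor
      · rintro ⟨⟨⟨⟨h1, h2⟩, hne1, hne2, hdvd⟩, h20⟩, h10⟩
        refine ⟨p.2, ⟨h2, h20, by rwa [h10, zero_add] at hdvd⟩, ?_⟩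
        exact Prod.ext_iff.mpr ⟨h10.symm, rfl⟩
      · rintro ⟨y, ⟨hyS, hy0, hdvd⟩, rfl⟩
        exact ⟨⟨⟨⟨h0S, hyS⟩, fun h => hy0 (by omega), fun h => hy0 (by omega),
          by rwa [zero_add]⟩, hy0⟩, rfl⟩
    have hEcard : ((Rf.filter (fun p : ℤ×ℤ => ¬ p.2 = 0)).filter
        (fun p : ℤ×ℤ => p.1 = 0)).card = Qf.card := by
      rw [hE]
      exact Finset.card_image_of_injective _ (fun x y hxy => by
        have := congrArg Prod.snd hxy; simpa using this)
    have hF : ((Rf.filter (fun p : ℤ×ℤ => ¬ p.2 = 0)).filter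
        (fun p : ℤ×ℤ => ¬ p.1 = 0)).filter (fun p : ℤ×ℤ => p.2.natAbs < p.1.natAbs) = Lf := by
      rw [hRfdef, hLfdef]
      ext p
      simp only [Finset.mem_filter, Finset.mem_product]
      constructor
      · rintro ⟨⟨⟨⟨⟨h1, h2⟩, hne1, hne2, hdvd⟩, h20⟩, h10⟩, hlt⟩
        exact ⟨⟨h1, h2⟩, by omega, hlt, hdvd⟩
      · rintro ⟨⟨h1, h2⟩, hna, hlt, hdvd⟩
        exact ⟨⟨⟨⟨⟨h1, h2⟩, by omega, by omega, hdvd⟩, by omega⟩, by omega⟩, hlt⟩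
    have hG : ((Rf.filter (fun p : ℤ×ℤ => ¬ p.2 = 0)).filter
        (fun p : ℤ×ℤ => ¬ p.1 = 0)).filter (fun p : ℤ×ℤ => ¬ p.2.natAbs < p.1.natAbs)
        = Lf.image Prod.swap := by
      rw [hRfdef, hLfdef]
      ext p
      simp only [Finset.mem_filter, Finset.mem_product, Finset.mem_image]
      constructor
      · rintro ⟨⟨⟨⟨⟨h1, h2⟩, hne1, hne2, hdvd⟩, h20⟩, h10⟩, hnlt⟩
        refine ⟨(p.2, p.1), ⟨⟨h2, h1⟩, by omega, by omega, by rwa [Int.add_comm p.1 p.2] at hdvd⟩, rfl⟩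
      · rintro ⟨⟨y, x⟩, ⟨⟨h2, h1⟩, hna, hlt, hdvd⟩, rfl⟩
        simp only [Prod.swap_prod_mk]
        exact ⟨⟨⟨⟨⟨h1, h2⟩, by omega, by omega, by rwa [Int.add_comm y x] at hdvd⟩, by omega⟩,
          by omega⟩, by omega⟩
    have hGcard : (((Rf.filter (fun p : ℤ×ℤ => ¬ p.2 = 0)).filter
        (fun p : ℤ×ℤ => ¬ p.1 = 0)).filter (fun p : ℤ×ℤ => ¬ p.2.natAbs < p.1.natAbs)).card
        = Lf.card := by
      rw [hG]
      exact Finset.card_image_of_injective _ Prod.swap_injective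
    rw [hF] at hsp5
    omega
  -- geometric identification
  have hlong : {α | α ∈ longRootsB ℓ ∧ ∃ k : ℤ, ht α = (q : ℚ) * k}
      = ↑(Lf.image (phiL ℓ hl)) := by
    ext α
    simp only [Set.mem_setOf_eq, Finset.coe_image, Set.mem_image, Finset.mem_coe]
    constructor
    · rintro ⟨⟨i, j, hij, hform⟩, k, hk⟩
      have hi := i.2
      have hj := j.2
      have hijv : (i:ℕ) < (j:ℕ) := hij
      have huv : ∃ u v : ℤ, α = phiL ℓ hl (u, v) ∧ u.natAbs = ℓ - (i:ℕ)
          ∧ v.natAbs = ℓ - (j:ℕ) := by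
        rcases hform with rfl | rfl | rfl | rfl
        · refine ⟨(ℓ:ℤ)-(i:ℕ), (ℓ:ℤ)-(j:ℕ), ?_, by omega, by omega⟩
          rw [phiL]; dsimp only; rw [phiS_pos, phiS_pos]
        · refine ⟨(ℓ:ℤ)-(i:ℕ), -((ℓ:ℤ)-(j:ℕ)), ?_, by omega, by omega⟩
          rw [phiL]; dsimp only; rw [phiS_pos, phiS_neg, sub_eq_add_neg]
        · refine ⟨-((ℓ:ℤ)-(i:ℕ)), (ℓ:ℤ)-(j:ℕ), ?_, by omega, by omega⟩
          rw [phiL]; dsimp only; rw [phiS_neg, phiS_pos]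
        · refine ⟨-((ℓ:ℤ)-(i:ℕ)), -((ℓ:ℤ)-(j:ℕ)), ?_, by omega, by omega⟩
          rw [phiL]; dsimp only; rw [phiS_neg, phiS_neg, sub_eq_add_neg]
      obtain ⟨u, v, hphi, hnu, hnv⟩ := huv
      have h1u : 1 ≤ u.natAbs := by omega
      have h1v : 1 ≤ v.natAbs := by omega
      have hlu : u.natAbs ≤ ℓ := by omega
      have hlv : v.natAbs ≤ ℓ := by omega
      have hhtv : ht α = (u : ℚ) + (v : ℚ) := by
        rw [hphi, phiL]
        dsimp only
        rw [map_add, ht_phiS ℓ hl ht hht u h1u hlu, ht_phiS ℓ hl ht hht v h1v hlv]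
      have hdvd : (q:ℤ) ∣ u + v := by
        refine ⟨k, ?_⟩
        have hcast : ((u + v : ℤ) : ℚ) = (((q:ℤ) * k : ℤ) : ℚ) := by
          push_cast
          rw [← hhtv, hk]
        exact_mod_cast hcast
      refine ⟨(u, v), ?_, hphi.symm⟩
      rw [hLfdef]
      refine Finset.mem_filter.mpr ⟨Finset.mem_product.mpr ⟨?_, ?_⟩, h1v, by omega, hdvd⟩
      · rw [hSdef]; exact Finset.mem_Ioc.mpr ⟨by omega, by omega⟩
      · rw [hSdef]; exact Finset.mem_Ioc.mpr ⟨by omega, by omega⟩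
    · rintro ⟨⟨u, v⟩, hmem, rfl⟩
      rw [hLfdef] at hmem
      simp only [Finset.mem_filter, Finset.mem_product, hSdef, Finset.mem_Ioc] at hmem
      obtain ⟨⟨⟨hu1, hu2⟩, hv1, hv2⟩, h1v, hvu, hdvd⟩ := hmem
      constructor
      · refine ⟨idxB ℓ hl u, idxB ℓ hl v, ?_, ?_⟩
        · have h1 := idxB_val ℓ hl u (by omega)
          have h2 := idxB_val ℓ hl v (by omega)
          exact Fin.lt_def.mpr (by omega)
        · rcases phiS_form ℓ hl u with e1 | e1 <;> rcases phiS_form ℓ hl v with e2 | e2 <;>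
            rw [phiL] <;> dsimp only <;> rw [e1, e2]
          · exact Or.inl rfl
          · exact Or.inr (Or.inl (sub_eq_add_neg _ _).symm)
          · exact Or.inr (Or.inr (Or.inl rfl))
          · exact Or.inr (Or.inr (Or.inr (sub_eq_add_neg _ _).symm))
      · obtain ⟨cc, hcc⟩ := hdvd
        refine ⟨cc, ?_⟩
        rw [phiL]
        dsimp only
        rw [map_add, ht_phiS ℓ hl ht hht u (by omega) (by omega),
          ht_phiS ℓ hl ht hht v (by omega) (by omega)]
        have := congrArg (fun z : ℤ => (z : ℚ)) hcc
        push_cast at this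
        linarith
  have hH2 : ((q / 2 : ℕ) : ℚ) = ((H:ℤ) : ℚ) := by rw [← hHdef]; push_cast; ring
  have hshort : {β | β ∈ shortRootsB ℓ ∧ ∃ k : ℤ, ht β = ((q / 2 : ℕ) : ℚ) * k}
      = ↑(Sf.image (phiS ℓ hl)) := by
    ext β
    simp only [Set.mem_setOf_eq, Finset.coe_image, Set.mem_image, Finset.mem_coe]
    constructor
    · rintro ⟨⟨i, hform⟩, k, hk⟩
      have hi := i.2
      have huv : ∃ u : ℤ, β = phiS ℓ hl u ∧ u.natAbs = ℓ - (i:ℕ) := by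
        rcases hform with rfl | rfl
        · exact ⟨(ℓ:ℤ)-(i:ℕ), (phiS_pos ℓ hl i).symm, by omega⟩
        · exact ⟨-((ℓ:ℤ)-(i:ℕ)), (phiS_neg ℓ hl i).symm, by omega⟩
      obtain ⟨u, hphi, hnu⟩ := huv
      have h1u : 1 ≤ u.natAbs := by omega
      have hlu : u.natAbs ≤ ℓ := by omega
      have hhtv : ht β = (u : ℚ) := by rw [hphi, ht_phiS ℓ hl ht hht u h1u hlu]
      have hdvd : (H:ℤ) ∣ u := by
        refine ⟨k, ?_⟩
        have hcast : ((u : ℤ) : ℚ) = (((H:ℤ) * k : ℤ) : ℚ) := by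
          push_cast
          rw [← hhtv, hk, hH2]
        exact_mod_cast hcast
      refine ⟨u, ?_, hphi.symm⟩
      rw [hSfdef]
      refine Finset.mem_filter.mpr ⟨?_, by omega, hdvd⟩
      rw [hSdef]; exact Finset.mem_Ioc.mpr ⟨by omega, by omega⟩
    · rintro ⟨u, hmem, rfl⟩
      rw [hSfdef] at hmem
      simp only [Finset.mem_filter, hSdef, Finset.mem_Ioc] at hmem
      obtain ⟨⟨hu1, hu2⟩, hu0, hdvd⟩ := hmem
      constructor
      · exact ⟨idxB ℓ hl u, phiS_form ℓ hl u⟩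
      · obtain ⟨cc, hcc⟩ := hdvd
        refine ⟨cc, ?_⟩
        rw [ht_phiS ℓ hl ht hht u (by omega) (by omega), hH2]
        have := congrArg (fun z : ℤ => (z : ℚ)) hcc
        push_cast at this ⊢
        linarith
  have hinjL : Set.InjOn (phiL ℓ hl) (Lf : Set (ℤ×ℤ)) := by
    rintro ⟨u, v⟩ hp ⟨u', v'⟩ hp' heq
    have hp2 : (u, v) ∈ Lf := hp
    have hp2' : (u', v') ∈ Lf := hp'
    rw [hLfdef] at hp2 hp2'
    simp only [Finset.mem_filter, Finset.mem_product, hSdef, Finset.mem_Ioc] at hp2 hp2'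
    obtain ⟨⟨⟨hu1, hu2⟩, hv1, hv2⟩, h1v, hvu, _⟩ := hp2
    obtain ⟨⟨⟨hu1', hu2'⟩, hv1', hv2'⟩, h1v', hvu', _⟩ := hp2'
    have := phiL_inj ℓ hl u v u' v' h1v hvu (by omega) h1v' hvu' (by omega) heq
    exact Prod.ext_iff.mpr this
  have hinjS : Set.InjOn (phiS ℓ hl) (Sf : Set ℤ) := by
    intro u hu u' hu' heq
    have hp2 : u ∈ Sf := hu
    have hp2' : u' ∈ Sf := hu'
    rw [hSfdef] at hp2 hp2'
    simp only [Finset.mem_filter, hSdef, Finset.mem_Ioc] at hp2 hp2'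
    obtain ⟨⟨hu1, hu2⟩, hu0, _⟩ := hp2
    obtain ⟨⟨hu1', hu2'⟩, hu0', _⟩ := hp2'
    exact phiS_inj ℓ hl u u' (by omega) (by omega) (by omega) (by omega) heq
  -- assemble
  rw [hlong, hshort, Set.ncard_coe_finset, Set.ncard_coe_finset,
    Finset.card_image_of_injOn hinjL, Finset.card_image_of_injOn hinjS]
  have hLfcard : 2*(Lf.card : ℤ) = K - (2*(ℓ:ℤ)+1) - 2*m₀ - 4*a := by
    have h1 : ((Pall.card : ℕ) : ℤ) = ((S.card : ℕ) : ℤ) + Sf.card + Rf.card := by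
      exact_mod_cast congrArg (fun n : ℕ => (n : ℤ)) hpart1
    have h2 : ((Rf.card : ℕ) : ℤ) = 2*Lf.card + 2*Qf.card := by
      exact_mod_cast congrArg (fun n : ℕ => (n : ℤ)) hpart2
    have h3 : ((S.card : ℕ) : ℤ) = 2*(ℓ:ℤ)+1 := by exact_mod_cast hScard
    omega
  have qLf : 2*((Lf.card : ℕ) : ℚ) = (K:ℚ) - (2*(ℓ:ℚ)+1) - 2*(m₀:ℚ) - 4*(a:ℚ) := by
    exact_mod_cast hLfcard
  have qSf : ((Sf.card : ℕ) : ℚ) = 2*(m₀:ℚ) := by exact_mod_cast hSfcard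
  by_cases hm : Even m₀
  · rw [if_pos hm]
    have hb0 : m₀ = 2*a := by
      have := Int.even_iff.mp hm
      omega
    have hq0' : (m₀:ℚ) = 2*(a:ℚ) := by exact_mod_cast hb0
    field_simp
    linarith
  · rw [if_neg hm]
    have hb1 : m₀ = 2*a + 1 := by
      have := Int.odd_iff.mp (Int.not_even_iff_odd.mp hm)
      omega
    have hq1' : (m₀:ℚ) = 2*(a:ℚ) + 1 := by exact_mod_cast hb1
    field_simp
    linarith
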